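/- The linear map φ* defined by H_f ↦ 9H_f+4H_g-3E, H_g ↦ 4H_f+H_g-E, Eᵢ ↦ 3H_f+H_g-E+Eᵢ (where E = ∑ⱼ₌₁⁸ Eⱼ) preserves the intersection form on Z H_f ⊕ Z H_g ⊕ ⊕ Z Eᵢ, fixes -K = 2H_f+2H_g-E, and acts on the E₇^{(1)} roots by αᵢ ↦ αᵢ + cᵢ(-K) with (c₀,c₁,…,c₇) = (0,0,0,0,1,0,0,-2). -/
import Mathlib


namespace DPA1Action

def Hf : Fin 10 → ℤ := Pi.single 0 1
def Hg : Fin 10 → ℤ := Pi.single 1 1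
def E (k : Fin 8) : Fin 10 → ℤ := Pi.single k.succ.succ 1

/-- The intersection form. -/
def inter (x y : Fin 10 → ℤ) : ℤ :=
  x 0 * y 1 + x 1 * y 0 - ∑ k : Fin 8, x k.succ.succ * y k.succ.succ

/-- `E = E₁ + ⋯ + E₈`. -/
def Esum : Fin 10 → ℤ := ∑ k : Fin 8, E k

/-- The anticanonical class `-K = 2H_f + 2H_g - E`. -/
def negK : Fin 10 → ℤ := 2 • Hf + 2 • Hg - Esum

/-- The ℤ-linear map `φ*` of the standard d-P(A₁⁽¹⁾*) dynamic:
`H_f ↦ 9H_f+4H_g-3E`, `H_g ↦ 4H_f+H_g-E`, `Eᵢ ↦ 3H_f+H_g-E+Eᵢ`. -/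
def φ (x : Fin 10 → ℤ) : Fin 10 → ℤ :=
  x 0 • (9 • Hf + 4 • Hg - 3 • Esum) + x 1 • (4 • Hf + Hg - Esum) +
    ∑ k : Fin 8, x k.succ.succ • (3 • Hf + Hg - Esum + E k)

/-- The `E₇⁽¹⁾` simple roots, indexed `α₀, α₁, …, α₇`. -/
def α : Fin 8 → (Fin 10 → ℤ) :=
  ![E 6 - E 7, E 2 - E 3, E 1 - E 2, E 0 - E 1, Hf - E 0 - E 4, E 4 - E 5, E 5 - E 6, Hg - Hf]

/-- The translation vector `(c₀, c₁, …, c₇) = (0,0,0,0,1,0,0,-2)`. -/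
def c : Fin 8 → ℤ := ![0, 0, 0, 0, 1, 0, 0, -2]


lemma Esum_apply0 : Esum 0 = 0 := by decide
lemma Esum_apply1 : Esum 1 = 0 := by decide
lemma Esum_applyE : ∀ k : Fin 8, Esum k.succ.succ = 1 := by decide
lemma Hf_E : ∀ k : Fin 8, Hf k.succ.succ = 0 := by decide
lemma Hg_E : ∀ k : Fin 8, Hg k.succ.succ = 0 := by decide
lemma E_0 : ∀ k : Fin 8, E k 0 = 0 := by decide
lemma E_1 : ∀ k : Fin 8, E k 1 = 0 := by decide
lemma E_E (j k : Fin 8) : E j k.succ.succ = if j = k then 1 else 0 := by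
  simp [E, Pi.single_apply, Fin.succ_inj, eq_comm]

lemma phi0 (x : Fin 10 → ℤ) :
    φ x 0 = 9 * x 0 + 4 * x 1 + 3 * ∑ k : Fin 8, x k.succ.succ := by
  simp [φ, Hf, Hg, Esum_apply0, Finset.sum_apply, E_0]
  ring_nf
  rw [← Finset.sum_mul]

lemma phi1 (x : Fin 10 → ℤ) :
    φ x 1 = 4 * x 0 + x 1 + ∑ k : Fin 8, x k.succ.succ := by
  simp [φ, Hf, Hg, Esum_apply1, Finset.sum_apply, E_1]
  ring

lemma phiE (x : Fin 10 → ℤ) (k : Fin 8) :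
    φ x k.succ.succ = -(3 * x 0) - x 1 - (∑ j : Fin 8, x j.succ.succ) + x k.succ.succ := by
  simp [φ, Hf_E, Hg_E, Esum_applyE, Finset.sum_apply, E_E, mul_ite,
    Finset.sum_add_distrib, Finset.sum_ite_eq, Finset.sum_ite_eq']
  ring

lemma inter_phi (x y : Fin 10 → ℤ) : inter (φ x) (φ y) = inter x y := by
  unfold inter
  rw [phi0, phi1, phi0, phi1]
  have h : ∑ k : Fin 8, φ x k.succ.succ * φ y k.succ.succ
      = ∑ k : Fin 8, ((-(3 * x 0) - x 1 - (∑ j : Fin 8, x j.succ.succ) + x k.succ.succ)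
        * (-(3 * y 0) - y 1 - (∑ j : Fin 8, y j.succ.succ) + y k.succ.succ)) :=
    Finset.sum_congr rfl fun k _ => by rw [phiE, phiE]
  rw [h]
  set sx := ∑ j : Fin 8, x j.succ.succ with hsx
  set sy := ∑ j : Fin 8, y j.succ.succ with hsy
  have expand : ∑ k : Fin 8, ((-(3 * x 0) - x 1 - sx + x k.succ.succ)
        * (-(3 * y 0) - y 1 - sy + y k.succ.succ))
      = 8 * ((-(3 * x 0) - x 1 - sx) * (-(3 * y 0) - y 1 - sy))
        + (-(3 * x 0) - x 1 - sx) * sy + sx * (-(3 * y 0) - y 1 - sy)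
        + ∑ k : Fin 8, x k.succ.succ * y k.succ.succ := by
    simp only [add_mul, mul_add, Finset.sum_add_distrib, ← Finset.mul_sum,
      ← Finset.sum_mul, ← hsx, ← hsy]
    simp [Finset.sum_const]
    ring
  rw [expand]
  ring

/-- `φ*` preserves the intersection form, fixes `-K`, and acts on the `E₇⁽¹⁾` roots by the
translation `αᵢ ↦ αᵢ + cᵢ(-K)` with `(c₀,…,c₇) = (0,0,0,0,1,0,0,-2)`. -/
theorem phi_E7_translation :
    (∀ x y : Fin 10 → ℤ, inter (φ x) (φ y) = inter x y) ∧
    φ negK = negK ∧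
    (∀ i : Fin 8, φ (α i) = α i + c i • negK) := by
  refine ⟨inter_phi, by decide, by decide⟩

end DPA1Action
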